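/- With M, g and τ_i as defined in the context, each τ_i is an idempotent transformation of M, τ_i ∘ τ_j = τ_j ∘ τ_i whenever i and j are not adjacent in Γ, and τ_i ∘ τ_j ∘ τ_i = τ_j ∘ τ_i ∘ τ_j = τ_i ∘ τ_j whenever Γ⃗ contains the arrow i → j. Consequently, the assignment ε_i ↦ τ_i extends uniquely to a monoid homomorphism from KH(Γ⃗) to the monoid of all total transformations of M under composition. -/

import Mathlib

open FreeMonoid SimpleGraph

/-- The defining relations of a Hecke-Kiselman monoid associated with the
mixed graph encoded by the binary relation `Θ`. -/
inductive HKRel {ι : Type*} (Θ : ι → ι → Prop) : FreeMonoid ι → FreeMonoid ι → Prop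
  | idem (i : ι) : HKRel Θ (of i * of i) (of i)
  | comm (i j : ι) (h₁ : ¬ Θ i j) (h₂ : ¬ Θ j i) :
      HKRel Θ (of i * of j) (of j * of i)
  | braid (i j : ι) (h₁ : Θ i j) (h₂ : Θ j i) :
      HKRel Θ (of i * of j * of i) (of j * of i * of j)
  | kisel (i j : ι) (h₁ : Θ i j) (h₂ : ¬ Θ j i) :
      HKRel Θ (of i * of j * of i) (of i * of j)
  | kisel' (i j : ι) (h₁ : Θ i j) (h₂ : ¬ Θ j i) :
      HKRel Θ (of j * of i * of j) (of i * of j)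

/-- The Hecke-Kiselman monoid of the mixed graph encoded by `Θ`. -/
abbrev HK {ι : Type*} (Θ : ι → ι → Prop) : Type _ := (conGen (HKRel Θ)).Quotient

/-- The canonical idempotent generators of a Hecke-Kiselman monoid. -/
def HK.gen {ι : Type*} (Θ : ι → ι → Prop) (i : ι) : HK Θ :=
  (conGen (HKRel Θ)).mk' (FreeMonoid.of i)

/-- Dynkin diagram of type `D n` (meaningful for `4 ≤ n`). -/
def typeD (n : ℕ) : SimpleGraph (Fin n) :=
  SimpleGraph.fromRel (fun i j =>
    ((i : ℕ) + 1 = (j : ℕ) ∧ 1 ≤ (i : ℕ)) ∨ ((i : ℕ) = 0 ∧ (j : ℕ) = 2))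

/-- Dynkin diagram of type `E n` (meaningful for `n = 6, 7, 8`). -/
def typeE (n : ℕ) : SimpleGraph (Fin n) :=
  SimpleGraph.fromRel (fun i j =>
    ((i : ℕ) + 1 = (j : ℕ) ∧ 1 ≤ (i : ℕ)) ∨ ((i : ℕ) = 0 ∧ (j : ℕ) = 3))

/-- A graph is of type `A`, `D` or `E` if it is isomorphic to one of the
simply laced Dynkin diagrams `A n` (`n ≥ 1`), `D n` (`n ≥ 4`), `E6`, `E7`, `E8`. -/
def IsADE {V : Type*} (G : SimpleGraph V) : Prop :=
  (∃ n, 1 ≤ n ∧ Nonempty (G ≃g pathGraph n)) ∨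
  (∃ n, 4 ≤ n ∧ Nonempty (G ≃g typeD n)) ∨
  (∃ n, (n = 6 ∨ n = 7 ∨ n = 8) ∧ Nonempty (G ≃g typeE n))

/-- A simply laced Dynkin diagram: a simple graph each of whose connected
components is of type `A`, `D` or `E`. -/
def IsSimplyLacedDynkin {V : Type*} (G : SimpleGraph V) : Prop :=
  ∀ c : G.ConnectedComponent, IsADE (G.induce c.supp)

/-- `Θ` is an orientation of the simple graph `G`: every edge of `G` is given
exactly one direction. -/
def IsOrientation {V : Type*} (G : SimpleGraph V) (Θ : V → V → Prop) : Prop :=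
  (∀ i j, G.Adj i j ↔ (Θ i j ∨ Θ j i)) ∧ (∀ i j, Θ i j → ¬ Θ j i)
variable {V : Type*}

/-- The set of arrows of the digraph `Θ`. -/
def Arrows (Θ : V → V → Prop) : Type _ := {p : V × V // Θ p.1 p.2}

/-- The set of sinks (vertices of outdegree zero) of the digraph `Θ`. -/
def Sinks (Θ : V → V → Prop) : Type _ := {v : V // ∀ w, ¬ Θ v w}

/-- The set of sinks of indegree two of the digraph `Θ`. -/
def Sinks₂ (Θ : V → V → Prop) : Type _ :=
  {v : V // (∀ w, ¬ Θ v w) ∧ Nat.card {u : V // Θ u v} = 2}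

/-- The set of sources (vertices of indegree zero) of the digraph `Θ`. -/
def Sources (Θ : V → V → Prop) : Type _ := {v : V // ∀ w, ¬ Θ w v}

/-- The set `M` on which the transformation representation acts: the disjoint
union of the arrows, the sinks, the sinks of indegree two and the sources. -/
def MSet (Θ : V → V → Prop) : Type _ :=
  Arrows Θ ⊕ Sinks Θ ⊕ Sinks₂ Θ ⊕ Sources Θ

/-!
Attach to every element of `M` the vertex it sits at: an arrow sits at its source, a sink
element at its sink, and a source element nowhere. Then `τ i` fixes everything not sitting at
`i`, and sends what sits at `i` to something sitting nowhere or at the source of an arrow into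
`i`. These two properties alone give all the relations: an element moved by `τ i` lands where
`τ i` fixes it, and where `τ j` fixes it as well unless `j → i` is an arrow.
-/

namespace HK

variable {ι M : Type*} [Monoid M] {Θ : ι → ι → Prop}

theorem hom_ext {φ ψ : HK Θ →* M} (h : ∀ i, φ (gen Θ i) = ψ (gen Θ i)) : φ = ψ :=
  Con.hom_ext <| FreeMonoid.hom_eq h

theorem existsUnique_hom_gen (t : ι → M)
    (ht : ∀ x y, HKRel Θ x y → FreeMonoid.lift t x = FreeMonoid.lift t y) :
    ∃! φ : HK Θ →* M, ∀ i, φ (gen Θ i) = t i := by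
  have hker : conGen (HKRel Θ) ≤ Con.ker (FreeMonoid.lift t) :=
    Con.conGen_le.2 fun x y h => (Con.ker_rel _).2 (ht x y h)
  exact ⟨(conGen (HKRel Θ)).lift _ hker, fun i => rfl,
    fun ψ hψ => hom_ext fun i => (hψ i).trans rfl⟩

end HK

structure MovesToPredecessors {α : Type*} (Θ : V → V → Prop) (loc : α → Option V)
    (τ : V → α → α) : Prop where
  apply_eq_self : ∀ {i x}, loc x ≠ some i → τ i x = x
  rel_of_loc_apply : ∀ {i x k}, loc x = some i → loc (τ i x) = some k → Θ k i

namespace MovesToPredecessors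

variable {α : Type*} {Θ : V → V → Prop} {loc : α → Option V} {τ : V → α → α}
  {i j : V} {x : α}

theorem apply_apply_of_loc_eq (h : MovesToPredecessors Θ loc τ) (hx : loc x = some i)
    (hji : ¬ Θ j i) : τ j (τ i x) = τ i x :=
  h.apply_eq_self fun hj => hji (h.rel_of_loc_apply hx hj)

theorem apply_apply_self (h : MovesToPredecessors Θ loc τ) (hΘ : ∀ i, ¬ Θ i i) (i : V)
    (x : α) : τ i (τ i x) = τ i x := by
  by_cases hx : loc x = some i
  · exact h.apply_apply_of_loc_eq hx (hΘ i)
  · rw [h.apply_eq_self hx, h.apply_eq_self hx]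

theorem apply_comm (h : MovesToPredecessors Θ loc τ) (hij : ¬ Θ i j) (hji : ¬ Θ j i)
    (x : α) : τ i (τ j x) = τ j (τ i x) := by
  rcases eq_or_ne i j with rfl | hne
  · rfl
  by_cases hxi : loc x = some i
  · have hxj : loc x ≠ some j := by rw [hxi]; exact Option.some_injective _ |>.ne hne
    rw [h.apply_eq_self hxj, h.apply_apply_of_loc_eq hxi hji]
  by_cases hxj : loc x = some j
  · rw [h.apply_eq_self hxi, h.apply_apply_of_loc_eq hxj hij]
  · rw [h.apply_eq_self hxi, h.apply_eq_self hxj, h.apply_eq_self hxi]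

theorem apply_apply_apply_left (h : MovesToPredecessors Θ loc τ) (hΘ : ∀ i, ¬ Θ i i)
    (hji : ¬ Θ j i) (hne : i ≠ j) (x : α) : τ i (τ j (τ i x)) = τ i (τ j x) := by
  by_cases hxi : loc x = some i
  · have hxj : loc x ≠ some j := by rw [hxi]; exact Option.some_injective _ |>.ne hne
    rw [h.apply_apply_of_loc_eq hxi hji, h.apply_apply_self hΘ, h.apply_eq_self hxj]
  · rw [h.apply_eq_self hxi]

theorem apply_apply_apply_right (h : MovesToPredecessors Θ loc τ) (hΘ : ∀ i, ¬ Θ i i)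
    (hji : ¬ Θ j i) (x : α) : τ j (τ i (τ j x)) = τ i (τ j x) := by
  by_cases hxi : loc (τ j x) = some i
  · exact h.apply_apply_of_loc_eq hxi hji
  · rw [h.apply_eq_self hxi, h.apply_apply_self hΘ]

theorem apply_apply_apply_left_eq_right (h : MovesToPredecessors Θ loc τ) (hΘ : ∀ i, ¬ Θ i i)
    (hij : Θ i j) (hji : ¬ Θ j i) (x : α) : τ i (τ j (τ i x)) = τ j (τ i (τ j x)) := by
  rw [h.apply_apply_apply_left hΘ hji (fun he => hΘ j (he ▸ hij)),
    h.apply_apply_apply_right hΘ hji]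

theorem lift_eq_of_hkRel (h : MovesToPredecessors Θ loc τ)
    (hΘ : ∀ i j, Θ i j → ¬ Θ j i) {x y : FreeMonoid V} (hxy : HKRel Θ x y) :
    FreeMonoid.lift (M := Function.End α) τ x =
      FreeMonoid.lift (M := Function.End α) τ y := by
  have hirr : ∀ i, ¬ Θ i i := fun i hi => hΘ i i hi hi
  rcases hxy with i | ⟨i, j, hij, hji⟩ | ⟨i, j, hij, hji⟩ | ⟨i, j, hij, -⟩ | ⟨i, j, hij, -⟩
  · exact funext (h.apply_apply_self hirr i)
  · exact funext (h.apply_comm hij hji)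
  · exact absurd hji (hΘ i j hij)
  · exact funext (h.apply_apply_apply_left hirr (hΘ i j hij) (fun he => hirr j (he ▸ hij)))
  · exact funext (h.apply_apply_apply_right hirr (hΘ i j hij))

end MovesToPredecessors

def MSet.loc {Θ : V → V → Prop} : MSet Θ → Option V
  | .inl a => some a.1.1
  | .inr (.inl s) => some s.1
  | .inr (.inr (.inl s)) => some s.1
  | .inr (.inr (.inr _)) => none

theorem kiselmanQuotient_transformation_representation_general
    (G : SimpleGraph V)
    (Θ : V → V → Prop) (hΘ : IsOrientation G Θ)
    (g : Sinks Θ ⊕ Sinks₂ Θ → Arrows Θ)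
    (hg_target : ∀ x, (g x).1.2 = Sum.elim (fun s => s.1) (fun s => s.1) x)
    (τ : V → MSet Θ → MSet Θ)
    -- `x` is an arrow with source `i` and `b` is an arrow with target `i`:
    (hτ₁ : ∀ (i : V) (a b : Arrows Θ), a.1.1 = i → b.1.2 = i →
      τ i (Sum.inl a) = Sum.inl b)
    -- `x` is an arrow with source `i` and `i` is a source:
    (hτ₂ : ∀ (i : V) (a : Arrows Θ) (s : Sources Θ), a.1.1 = i → s.1 = i →
      τ i (Sum.inl a) = Sum.inr (Sum.inr (Sum.inr s)))
    -- `x` is the element of `Sinks` corresponding to the sink `i`: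
    (hτ₃ : ∀ (i : V) (s : Sinks Θ), s.1 = i →
      τ i (Sum.inr (Sum.inl s)) = Sum.inl (g (Sum.inl s)))
    -- `x` is the element of `Sinks₂` corresponding to the sink `i`:
    (hτ₄ : ∀ (i : V) (s : Sinks₂ Θ), s.1 = i →
      τ i (Sum.inr (Sum.inr (Sum.inl s))) = Sum.inl (g (Sum.inr s)))
    -- all remaining elements are fixed:
    (hτ₅ : ∀ (i : V) (a : Arrows Θ), a.1.1 ≠ i → τ i (Sum.inl a) = Sum.inl a)
    (hτ₆ : ∀ (i : V) (s : Sinks Θ), s.1 ≠ i →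
      τ i (Sum.inr (Sum.inl s)) = Sum.inr (Sum.inl s))
    (hτ₇ : ∀ (i : V) (s : Sinks₂ Θ), s.1 ≠ i →
      τ i (Sum.inr (Sum.inr (Sum.inl s))) = Sum.inr (Sum.inr (Sum.inl s)))
    (hτ₈ : ∀ (i : V) (s : Sources Θ),
      τ i (Sum.inr (Sum.inr (Sum.inr s))) = Sum.inr (Sum.inr (Sum.inr s))) :
    (∀ i, τ i ∘ τ i = τ i) ∧
    (∀ i j, ¬ G.Adj i j → τ i ∘ τ j = τ j ∘ τ i) ∧
    (∀ i j, Θ i j →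
      τ i ∘ τ j ∘ τ i = τ j ∘ τ i ∘ τ j ∧ τ j ∘ τ i ∘ τ j = τ i ∘ τ j) ∧
    (∃! φ : HK Θ →* Function.End (MSet Θ), ∀ i, φ (HK.gen Θ i) = τ i) := by
  obtain ⟨hadj, hasym⟩ := hΘ
  have hirr : ∀ i, ¬ Θ i i := fun i hi => hasym i i hi hi
  have hτ : MovesToPredecessors Θ MSet.loc τ := by
    refine ⟨fun {i x} hx => ?_, fun {i x k} hx hk => ?_⟩
    · rcases x with a | s | s | s
      exacts [hτ₅ i a (mt (congrArg some) hx), hτ₆ i s (mt (congrArg some) hx),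
        hτ₇ i s (mt (congrArg some) hx), hτ₈ i s]
    · have hg : ∀ x, Θ (g x).1.1 (Sum.elim (fun s => s.1) (fun s => s.1) x) :=
        fun x => hg_target x ▸ (g x).2
      rcases x with a | s | s | s
      · by_cases hin : ∃ u, Θ u i
        · obtain ⟨u, hu⟩ := hin
          rw [hτ₁ i a ⟨(u, i), hu⟩ (Option.some_injective _ hx) rfl] at hk
          exact Option.some_injective _ hk ▸ hu
        · push Not at hin
          rw [hτ₂ i a ⟨i, hin⟩ (Option.some_injective _ hx) rfl] at hk
          cases hk
      · rw [hτ₃ i s (Option.some_injective _ hx)] at hk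
        exact Option.some_injective _ hk ▸ Option.some_injective _ hx ▸ hg (.inl s)
      · rw [hτ₄ i s (Option.some_injective _ hx)] at hk
        exact Option.some_injective _ hk ▸ Option.some_injective _ hx ▸ hg (.inr s)
      · cases hx
  have hnot : ∀ i j, ¬ G.Adj i j → ¬ Θ i j ∧ ¬ Θ j i := fun i j h => not_or.1 (mt (hadj i j).2 h)
  refine ⟨fun i => funext (hτ.apply_apply_self hirr i),
    fun i j h => funext (hτ.apply_comm (hnot i j h).1 (hnot i j h).2),
    fun i j hij => ⟨funext (hτ.apply_apply_apply_left_eq_right hirr hij (hasym i j hij)),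
      funext (hτ.apply_apply_apply_right hirr (hasym i j hij))⟩,
    HK.existsUnique_hom_gen _ fun x y => hτ.lift_eq_of_hkRel hasym⟩

/-- Let `Θ` be an orientation of a simply laced Dynkin diagram `G`
such that every triple point has indegree at most one, let
`g : Sinks ⊔ Sinks₂ → Arrows` be an injection sending each vertex to an arrow
terminating at it, and let `τ i : MSet Θ → MSet Θ` (for vertices `i`) be the family
of transformations defined by the paper's formula (here specified by the case
equations `hτ₁`–`hτ₇`). Then every `τ i` is idempotent, `τ i` and `τ j` commute
when `i` and `j` are not adjacent, the Kiselman relations hold along each arrow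
`i → j`, and consequently `ε i ↦ τ i` extends uniquely to a monoid homomorphism
from the Kiselman quotient of the 0-Hecke monoid to the monoid of total
transformations of `MSet Θ` under composition. -/
theorem kiselmanQuotient_transformation_representation
    [Fintype V] (G : SimpleGraph V) (hG : IsSimplyLacedDynkin G)
    (Θ : V → V → Prop) (hΘ : IsOrientation G Θ)
    (hdeg : ∀ v : V, Nat.card {w : V // G.Adj v w} = 3 → Nat.card {w : V // Θ w v} ≤ 1)
    (g : Sinks Θ ⊕ Sinks₂ Θ → Arrows Θ)
    (hg_inj : Function.Injective g)
    (hg_target : ∀ x, (g x).1.2 = Sum.elim (fun s => s.1) (fun s => s.1) x)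
    (τ : V → MSet Θ → MSet Θ)
    -- `x` is an arrow with source `i` and `b` is an arrow with target `i`:
    (hτ₁ : ∀ (i : V) (a b : Arrows Θ), a.1.1 = i → b.1.2 = i →
      τ i (Sum.inl a) = Sum.inl b)
    -- `x` is an arrow with source `i` and `i` is a source:
    (hτ₂ : ∀ (i : V) (a : Arrows Θ) (s : Sources Θ), a.1.1 = i → s.1 = i →
      τ i (Sum.inl a) = Sum.inr (Sum.inr (Sum.inr s)))
    -- `x` is the element of `Sinks` corresponding to the sink `i`:
    (hτ₃ : ∀ (i : V) (s : Sinks Θ), s.1 = i →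
      τ i (Sum.inr (Sum.inl s)) = Sum.inl (g (Sum.inl s)))
    -- `x` is the element of `Sinks₂` corresponding to the sink `i`:
    (hτ₄ : ∀ (i : V) (s : Sinks₂ Θ), s.1 = i →
      τ i (Sum.inr (Sum.inr (Sum.inl s))) = Sum.inl (g (Sum.inr s)))
    -- all remaining elements are fixed:
    (hτ₅ : ∀ (i : V) (a : Arrows Θ), a.1.1 ≠ i → τ i (Sum.inl a) = Sum.inl a)
    (hτ₆ : ∀ (i : V) (s : Sinks Θ), s.1 ≠ i →
      τ i (Sum.inr (Sum.inl s)) = Sum.inr (Sum.inl s))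
    (hτ₇ : ∀ (i : V) (s : Sinks₂ Θ), s.1 ≠ i →
      τ i (Sum.inr (Sum.inr (Sum.inl s))) = Sum.inr (Sum.inr (Sum.inl s)))
    (hτ₈ : ∀ (i : V) (s : Sources Θ),
      τ i (Sum.inr (Sum.inr (Sum.inr s))) = Sum.inr (Sum.inr (Sum.inr s))) :
    (∀ i, τ i ∘ τ i = τ i) ∧
    (∀ i j, ¬ G.Adj i j → τ i ∘ τ j = τ j ∘ τ i) ∧
    (∀ i j, Θ i j →
      τ i ∘ τ j ∘ τ i = τ j ∘ τ i ∘ τ j ∧ τ j ∘ τ i ∘ τ j = τ i ∘ τ j) ∧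
    (∃! φ : HK Θ →* Function.End (MSet Θ), ∀ i, φ (HK.gen Θ i) = τ i) :=
  kiselmanQuotient_transformation_representation_general G Θ hΘ g hg_target τ hτ₁ hτ₂ hτ₃ hτ₄ hτ₅
    hτ₆ hτ₇ hτ₈
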